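/- For the mixture bounds of Lemma 2, equality H_n(x,y) = F(x,y) = K_n(x,y) for all (x,y) holds if and only if (p_1,...,p_n) = (1/n, ..., 1/n), provided the maps r ↦ F_{r:n}(x,y) are not all equal for some (x,y) (e.g., F strictly increasing). -/

import Mathlib

open MeasureTheory

/-- Marginal CDF of `X` for the joint density `f`. -/
noncomputable def margCDF (f : ℝ → ℝ → ℝ) (x : ℝ) : ℝ :=
  ∫ u in Set.Iic x, ∫ v, f u v

/-- Joint CDF of `(X,Y)` with joint density `f`. -/
noncomputable def jointCDF (f : ℝ → ℝ → ℝ) (x y : ℝ) : ℝ :=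
  ∫ u in Set.Iic x, ∫ v in Set.Iic y, f u v

/-- Joint CDF `F_{r:n}` of the `r`-th order statistic and its concomitant. -/
noncomputable def concomCDF (f : ℝ → ℝ → ℝ) (n r : ℕ) (x y : ℝ) : ℝ :=
  (n : ℝ) * (n - 1).choose (r - 1) *
    ∫ u in Set.Iic x,
      (margCDF f u) ^ (r - 1) * (1 - margCDF f u) ^ (n - r) *
        ∫ v in Set.Iic y, f u v

/-!
Write `n = m + 1`, `t` for the marginal CDF of `X` and `b_{m,k}` for the Bernstein polynomials.
Then `F_{k+1:m+1}(x,y) = (m+1) ∫_{u ≤ x} b_{m,k}(t u) ∂ᵤF(u,y)`, and `∑ₖ b_{m,k} = 1` gives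
`∑_r F_{r:n} = n F`, so uniform weights give equality. Conversely `Kₙ = F` says
`∑_r (p_r - 1/n) F_{r:n} = 0` for all `(x,y)`, which forces `G(t X) = 0` almost surely for
`G = ∑ₖ (p_{k+1} - 1/n) b_{m,k}`. As `X` has a density, each level set of `t` is null for its law,
so `G` vanishes identically; the Bernstein polynomials being linearly independent, `p_r = 1/n`.
-/

open Set Filter Polynomial ProbabilityTheory

theorem Finset.sum_Icc_one_eq_sum_range {M : Type*} [AddCommMonoid M] (φ : ℕ → M) (m : ℕ) :
    ∑ r ∈ Finset.Icc 1 (m + 1), φ r = ∑ k ∈ Finset.range (m + 1), φ (k + 1) := by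
  rw [← Finset.Ico_add_one_right_eq_Icc, Finset.sum_Ico_eq_sum_range]
  simp [add_comm]

theorem Finset.sum_Icc_one_reflect {M : Type*} [AddCommMonoid M] (φ : ℕ → M) (n : ℕ) :
    ∑ i ∈ Finset.Icc 1 n, φ (n - i + 1) = ∑ i ∈ Finset.Icc 1 n, φ i :=
  Finset.sum_nbij' (fun i => n - i + 1) (fun i => n - i + 1) (by simp; omega) (by simp; omega)
    (by simp; omega) (by simp; omega) fun _ _ => rfl

theorem Polynomial.eq_zero_of_sum_C_mul_X_pow_mul_eq_zero {R : Type*} [CommRing R]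
    [NoZeroDivisors R] {s : Finset ℕ} {a : ℕ → R} {Q : ℕ → R[X]}
    (hQ : ∀ k ∈ s, (Q k).coeff 0 ≠ 0) (h : ∑ k ∈ s, C (a k) * (X ^ k * Q k) = 0) :
    ∀ k ∈ s, a k = 0 := by
  induction s using Finset.induction_on_min with
  | empty => simp
  | insert k s hks ih =>
    rw [Finset.sum_insert fun hk => lt_irrefl k (hks k hk)] at h
    have hrest : (∑ j ∈ s, C (a j) * (X ^ j * Q j)).coeff k = 0 := by
      rw [finsetSum_coeff]
      exact Finset.sum_eq_zero fun j hj => by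
        rw [coeff_C_mul, coeff_X_pow_mul', if_neg (not_le.2 (hks j hj)), mul_zero]
    have hk : a k = 0 := by
      have hcoeff := congrArg (coeff · k) h
      simp only [coeff_add, hrest, coeff_C_mul, coeff_X_pow_mul', le_refl, if_true, Nat.sub_self,
        add_zero, coeff_zero] at hcoeff
      exact (mul_eq_zero.1 hcoeff).resolve_right (hQ k (Finset.mem_insert_self k s))
    rw [hk, C_0, zero_mul, zero_add] at h
    intro j hj
    rcases Finset.mem_insert.1 hj with rfl | hj
    · exact hk
    · exact ih (fun i hi => hQ i (Finset.mem_insert_of_mem hi)) h j hj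

theorem bernsteinPolynomial.eq_zero_of_sum_C_mul_eq_zero {R : Type*} [CommRing R] [IsDomain R]
    [CharZero R] {m : ℕ} {a : ℕ → R}
    (h : ∑ k ∈ Finset.range (m + 1), C (a k) * bernsteinPolynomial R m k = 0) :
    ∀ k ∈ Finset.range (m + 1), a k = 0 := by
  have hchoose : ∀ k ∈ Finset.range (m + 1), (m.choose k : R) ≠ 0 := fun k hk =>
    Nat.cast_ne_zero.2 (Nat.choose_pos (Nat.lt_succ_iff.1 (Finset.mem_range.1 hk))).ne'
  have hmul := Polynomial.eq_zero_of_sum_C_mul_X_pow_mul_eq_zero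
    (a := fun k => a k * m.choose k) (Q := fun k => (1 - X) ^ (m - k)) (s := Finset.range (m + 1))
    (fun k _ => by simp [coeff_zero_eq_eval_zero]) (by
      rw [← h]
      refine Finset.sum_congr rfl fun k _ => ?_
      simp only [bernsteinPolynomial, C_mul, C_eq_natCast]
      ring)
  exact fun k hk => (mul_eq_zero.1 (hmul k hk)).resolve_right (hchoose k hk)

theorem ae_eq_zero_of_forall_setIntegral_Iic_eq_zero {α : Type*} [TopologicalSpace α]
    [LinearOrder α] [OrderTopology α] [SecondCountableTopology α] [MeasurableSpace α]
    [BorelSpace α] {μ : Measure α} {g : α → ℝ} (hg : Integrable g μ)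
    (hg0 : ∀ x, ∫ u in Iic x, g u ∂μ = 0) : g =ᵐ[μ] 0 := by
  set ν₁ := μ.withDensity fun u => ENNReal.ofReal (g u)
  set ν₂ := μ.withDensity fun u => ENNReal.ofReal (-g u)
  have := isFiniteMeasure_withDensity_ofReal hg.hasFiniteIntegral
  have := isFiniteMeasure_withDensity_ofReal hg.neg.hasFiniteIntegral
  have hIic : ∀ x, ν₁ (Iic x) = ν₂ (Iic x) := by
    intro x
    have hx := integral_eq_lintegral_pos_part_sub_lintegral_neg_part (hg.restrict (s := Iic x))
    rw [hg0 x, eq_comm, sub_eq_zero, ← withDensity_apply _ measurableSet_Iic,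
      ← withDensity_apply _ measurableSet_Iic] at hx
    exact (ENNReal.toReal_eq_toReal_iff' (measure_ne_top ν₁ _) (measure_ne_top ν₂ _)).1 hx
  have hae := (withDensity_eq_iff hg.aemeasurable.ennreal_ofReal
    hg.neg.aemeasurable.ennreal_ofReal hg.lintegral_lt_top.ne).1 (Measure.ext_of_Iic _ _ hIic)
  filter_upwards [hae] with u hu
  rcases le_total (g u) 0 with hu0 | hu0
  · rw [ENNReal.ofReal_of_nonpos hu0, eq_comm, ENNReal.ofReal_eq_zero] at hu
    exact le_antisymm hu0 (neg_nonpos.1 hu)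
  · rw [Pi.neg_apply, ENNReal.ofReal_of_nonpos (neg_nonpos.2 hu0), ENNReal.ofReal_eq_zero] at hu
    exact le_antisymm hu hu0

theorem StieltjesFunction.measure_preimage_singleton_eq_zero (f : StieltjesFunction ℝ)
    [NullSingletonClass f.measure] (c : ℝ) : f.measure (f ⁻¹' {c}) = 0 := by
  set S := f ⁻¹' {c}
  have hS : S.OrdConnected := ordConnected_singleton.preimage_mono f.mono
  have hIcc : ∀ a ∈ S, ∀ b ∈ S, f.measure (Icc a b) = 0 := by
    intro a (ha : f a = c) b (hb : f b = c)
    rw [← measure_congr Ioc_ae_eq_Icc, f.measure_Ioc, ha, hb, sub_self, ENNReal.ofReal_zero]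
  -- apart from its endpoints, the interval `S` is covered by intervals with rational ends in `S`
  have hcover : S ⊆ (⋃ (q : ℚ × ℚ) (_ : (q.1 : ℝ) ∈ S ∧ (q.2 : ℝ) ∈ S), Icc (q.1 : ℝ) q.2)
      ∪ {sInf S, sSup S} := by
    intro w hw
    by_cases hmin : IsLeast S w
    · exact Or.inr (Or.inl hmin.csInf_eq.symm)
    by_cases hmax : IsGreatest S w
    · exact Or.inr (Or.inr hmax.csSup_eq.symm)
    obtain ⟨u, hu, huw⟩ : ∃ u ∈ S, u < w := by
      simpa [IsLeast, lowerBounds, hw] using hmin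
    obtain ⟨v, hv, hwv⟩ : ∃ v ∈ S, w < v := by
      simpa [IsGreatest, upperBounds, hw] using hmax
    obtain ⟨q₁, huq₁, hq₁w⟩ := exists_rat_btwn huw
    obtain ⟨q₂, hwq₂, hq₂v⟩ := exists_rat_btwn hwv
    refine Or.inl (mem_iUnion₂.2 ⟨(q₁, q₂), ⟨?_, ?_⟩, hq₁w.le, hwq₂.le⟩)
    · exact hS.out hu hw ⟨huq₁.le, hq₁w.le⟩
    · exact hS.out hw hv ⟨hwq₂.le, hq₂v.le⟩
  refine measure_mono_null hcover (measure_union_null ?_ ((toFinite _).countable.measure_zero _))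
  exact measure_iUnion_null fun q => measure_iUnion_null fun hq => hIcc _ hq.1 _ hq.2

theorem ProbabilityTheory.eq_zero_of_ae_eval_cdf_eq_zero {μ : Measure ℝ} [IsProbabilityMeasure μ]
    [NullSingletonClass μ] {G : ℝ[X]} (hG : ∀ᵐ x ∂μ, G.eval (cdf μ x) = 0) : G = 0 := by
  by_contra hG0
  have : NullSingletonClass (cdf μ).measure := by rw [measure_cdf]; infer_instance
  have hroots : ∀ᵐ x ∂μ, G.eval (cdf μ x) ≠ 0 := by
    rw [ae_iff]
    push Not
    have : {x | G.eval (cdf μ x) = 0} = ⋃ z ∈ {z | G.IsRoot z}, cdf μ ⁻¹' {z} := by ext; simp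
    rw [this, measure_biUnion_null_iff (Polynomial.finite_setOfPred_isRoot hG0).countable]
    intro z _
    simpa only [measure_cdf] using (cdf μ).measure_preimage_singleton_eq_zero z
  apply IsProbabilityMeasure.ne_zero μ
  rw [← ae_eq_bot, ← eventually_false_iff_eq_bot]
  filter_upwards [hG, hroots] with x h1 h2 using h2 h1

noncomputable def marginalLaw (f : ℝ → ℝ → ℝ) : Measure ℝ :=
  volume.withDensity fun u => ENNReal.ofReal (∫ v, f u v)

section Concomitant

variable {f : ℝ → ℝ → ℝ}

instance : NullSingletonClass (marginalLaw f) := by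
  unfold marginalLaw; infer_instance

theorem integrable_integral_Iic (hint : Integrable fun p : ℝ × ℝ => f p.1 p.2) (y : ℝ) :
    Integrable fun u => ∫ v in Iic y, f u v := by
  have h := hint.restrict (s := univ ×ˢ Iic y)
  rw [Measure.volume_eq_prod, ← Measure.prod_restrict, Measure.restrict_univ] at h
  exact h.integral_prod_left

theorem marginalLaw_Iic (hpos : ∀ u v, 0 ≤ f u v)
    (hint : Integrable fun p : ℝ × ℝ => f p.1 p.2) (x : ℝ) :
    marginalLaw f (Iic x) = ENNReal.ofReal (margCDF f x) := by
  rw [marginalLaw, withDensity_apply _ measurableSet_Iic, margCDF,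
    ofReal_integral_eq_lintegral_ofReal hint.integral_prod_left.integrableOn
      (Eventually.of_forall fun u => integral_nonneg (hpos u))]

theorem isProbabilityMeasure_marginalLaw (hpos : ∀ u v, 0 ≤ f u v)
    (hint : Integrable fun p : ℝ × ℝ => f p.1 p.2) (hprob : ∫ p : ℝ × ℝ, f p.1 p.2 = 1) :
    IsProbabilityMeasure (marginalLaw f) := by
  constructor
  rw [marginalLaw, withDensity_apply _ MeasurableSet.univ, setLIntegral_univ,
    ← ofReal_integral_eq_lintegral_ofReal hint.integral_prod_left
      (Eventually.of_forall fun u => integral_nonneg (hpos u)),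
    ← integral_prod _ hint, ← Measure.volume_eq_prod, hprob, ENNReal.ofReal_one]

theorem margCDF_eq_cdf (hpos : ∀ u v, 0 ≤ f u v)
    (hint : Integrable fun p : ℝ × ℝ => f p.1 p.2) (hprob : ∫ p : ℝ × ℝ, f p.1 p.2 = 1) :
    margCDF f = cdf (marginalLaw f) := by
  have := isProbabilityMeasure_marginalLaw hpos hint hprob
  ext x
  rw [cdf_eq_real, measureReal_def, marginalLaw_Iic hpos hint, ENNReal.toReal_ofReal]
  exact setIntegral_nonneg measurableSet_Iic fun u _ => integral_nonneg (hpos u)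

theorem integrable_eval_margCDF_mul (hpos : ∀ u v, 0 ≤ f u v)
    (hint : Integrable fun p : ℝ × ℝ => f p.1 p.2) (hprob : ∫ p : ℝ × ℝ, f p.1 p.2 = 1)
    (G : ℝ[X]) (y : ℝ) :
    Integrable fun u => G.eval (margCDF f u) * ∫ v in Iic y, f u v := by
  obtain ⟨C, hC⟩ := isCompact_Icc.exists_bound_of_continuousOn
    (G.continuous.continuousOn (s := Icc (0 : ℝ) 1))
  rw [margCDF_eq_cdf hpos hint hprob]
  exact (integrable_integral_Iic hint y).bdd_mul
    (G.continuous.measurable.comp (monotone_cdf _).measurable).aestronglyMeasurable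
    (Eventually.of_forall fun u => hC _ ⟨cdf_nonneg _ _, cdf_le_one _ _⟩)

theorem concomCDF_succ_succ (m k : ℕ) (x y : ℝ) :
    concomCDF f (m + 1) (k + 1) x y = (m + 1) *
      ∫ u in Iic x, (bernsteinPolynomial ℝ m k).eval (margCDF f u) * ∫ v in Iic y, f u v := by
  simp only [concomCDF, bernsteinPolynomial, eval_mul, eval_pow, eval_sub, eval_one, eval_X,
    eval_natCast, Nat.add_sub_cancel, Nat.add_sub_add_right, Nat.cast_add, Nat.cast_one, mul_assoc,
    ← integral_const_mul]

theorem sum_mul_concomCDF (hpos : ∀ u v, 0 ≤ f u v)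
    (hint : Integrable fun p : ℝ × ℝ => f p.1 p.2) (hprob : ∫ p : ℝ × ℝ, f p.1 p.2 = 1)
    (m : ℕ) (q : ℕ → ℝ) (x y : ℝ) :
    ∑ r ∈ Finset.Icc 1 (m + 1), q r * concomCDF f (m + 1) r x y = (m + 1) *
      ∫ u in Iic x, (∑ k ∈ Finset.range (m + 1), C (q (k + 1)) * bernsteinPolynomial ℝ m k).eval
        (margCDF f u) * ∫ v in Iic y, f u v := by
  simp only [Finset.sum_Icc_one_eq_sum_range, eval_finsetSum, eval_mul, eval_C, Finset.sum_mul,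
    mul_assoc]
  rw [integral_finsetSum _ fun k _ =>
    ((integrable_eval_margCDF_mul hpos hint hprob _ y).const_mul (q (k + 1))).integrableOn,
    Finset.mul_sum]
  refine Finset.sum_congr rfl fun k _ => ?_
  rw [concomCDF_succ_succ, integral_const_mul]
  ring

theorem sum_concomCDF (hpos : ∀ u v, 0 ≤ f u v)
    (hint : Integrable fun p : ℝ × ℝ => f p.1 p.2) (hprob : ∫ p : ℝ × ℝ, f p.1 p.2 = 1)
    {n : ℕ} (hn : 1 ≤ n) (x y : ℝ) :
    ∑ r ∈ Finset.Icc 1 n, concomCDF f n r x y = n * jointCDF f x y := by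
  obtain ⟨m, rfl⟩ := Nat.exists_eq_add_of_le' hn
  simpa [bernsteinPolynomial.sum, jointCDF] using sum_mul_concomCDF hpos hint hprob m 1 x y

theorem ae_marginalLaw_eq_zero_of_forall_setIntegral_Iic_eq_zero
    (hint : Integrable fun p : ℝ × ℝ => f p.1 p.2) {g : ℝ → ℝ}
    (hgi : ∀ y, Integrable fun u => g u * ∫ v in Iic y, f u v)
    (hg : ∀ x y, ∫ u in Iic x, g u * ∫ v in Iic y, f u v = 0) :
    ∀ᵐ u ∂marginalLaw f, g u = 0 := by
  have hzero : ∀ᵐ u, ∀ k : ℕ, g u * ∫ v in Iic (k : ℝ), f u v = 0 :=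
    ae_all_iff.2 fun k => ae_eq_zero_of_forall_setIntegral_Iic_eq_zero (hgi k) (hg · k)
  have hmul : ∀ᵐ u, g u * ∫ v, f u v = 0 := by
    filter_upwards [hzero, hint.prod_right_ae] with u hu hfu
    have hlim := tendsto_setIntegral_of_monotone (fun y : ℝ => measurableSet_Iic)
      (fun _ _ h => Iic_subset_Iic.2 h) (by rw [iUnion_Iic]; exact hfu.integrableOn)
    rw [iUnion_Iic, Measure.restrict_univ] at hlim
    have := (tendsto_const_nhds (x := g u)).mul (hlim.comp tendsto_natCast_atTop_atTop)
    simp only [Function.comp_def, hu] at this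
    exact tendsto_nhds_unique this tendsto_const_nhds
  rw [marginalLaw, ae_withDensity_iff' hint.integral_prod_left.aemeasurable.ennreal_ofReal]
  filter_upwards [hmul] with u hu hm
  exact (mul_eq_zero.1 hu).resolve_right fun h => hm (by rw [h, ENNReal.ofReal_zero])

theorem eq_zero_of_forall_sum_mul_concomCDF_eq_zero (hpos : ∀ u v, 0 ≤ f u v)
    (hint : Integrable fun p : ℝ × ℝ => f p.1 p.2) (hprob : ∫ p : ℝ × ℝ, f p.1 p.2 = 1)
    {n : ℕ} (hn : 1 ≤ n) {q : ℕ → ℝ}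
    (hq : ∀ x y, ∑ r ∈ Finset.Icc 1 n, q r * concomCDF f n r x y = 0) :
    ∀ r ∈ Finset.Icc 1 n, q r = 0 := by
  obtain ⟨m, rfl⟩ := Nat.exists_eq_add_of_le' hn
  set G := ∑ k ∈ Finset.range (m + 1), C (q (k + 1)) * bernsteinPolynomial ℝ m k
  have hGint : ∀ x y, ∫ u in Iic x, G.eval (margCDF f u) * ∫ v in Iic y, f u v = 0 := by
    intro x y
    have hxy := hq x y
    rw [sum_mul_concomCDF hpos hint hprob] at hxy
    exact (mul_eq_zero.1 hxy).resolve_left (by positivity)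
  have := isProbabilityMeasure_marginalLaw hpos hint hprob
  have hae := ae_marginalLaw_eq_zero_of_forall_setIntegral_Iic_eq_zero hint
    (integrable_eval_margCDF_mul hpos hint hprob G) hGint
  rw [margCDF_eq_cdf hpos hint hprob] at hae
  have hcoeff :=
    bernsteinPolynomial.eq_zero_of_sum_C_mul_eq_zero (eq_zero_of_ae_eval_cdf_eq_zero hae)
  intro r hr
  rw [Finset.mem_Icc] at hr
  simpa [Nat.sub_add_cancel hr.1] using hcoeff (r - 1) (Finset.mem_range.2 (by omega))

end Concomitant

theorem stmt10_general (n : ℕ) (hn : 1 ≤ n) (f : ℝ → ℝ → ℝ)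
    (hpos : ∀ u v, 0 ≤ f u v)
    (hint : Integrable fun p : ℝ × ℝ => f p.1 p.2)
    (hprob : ∫ p : ℝ × ℝ, f p.1 p.2 = 1)
    (p : ℕ → ℝ) :
    (∀ x y : ℝ,
        ∑ i ∈ Finset.Icc 1 n, p i * concomCDF f n (n - i + 1) x y = jointCDF f x y ∧
        jointCDF f x y = ∑ i ∈ Finset.Icc 1 n, p i * concomCDF f n i x y) ↔
      ∀ i, 1 ≤ i → i ≤ n → p i = (1 / n : ℝ) := by
  constructor
  · intro hall i hi1 hin
    refine sub_eq_zero.1 (eq_zero_of_forall_sum_mul_concomCDF_eq_zero hpos hint hprob hn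
      (q := fun r => p r - 1 / n) (fun x y => ?_) i (Finset.mem_Icc.2 ⟨hi1, hin⟩))
    simp only [sub_mul, Finset.sum_sub_distrib, ← Finset.mul_sum, sum_concomCDF hpos hint hprob hn,
      ← (hall x y).2]
    field_simp
    ring
  · intro hp x y
    have huniform : ∀ φ : ℕ → ℝ,
        ∑ i ∈ Finset.Icc 1 n, p i * φ i = (∑ i ∈ Finset.Icc 1 n, φ i) / n := fun φ => by
      rw [Finset.sum_div]
      exact Finset.sum_congr rfl fun i hi => by
        rw [hp i (Finset.mem_Icc.1 hi).1 (Finset.mem_Icc.1 hi).2]; ring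
    rw [huniform (concomCDF f n · x y), huniform (fun i => concomCDF f n (n - i + 1) x y),
      Finset.sum_Icc_one_reflect (concomCDF f n · x y), sum_concomCDF hpos hint hprob hn]
    field_simp
    simp

/-- Equality case of Lemma 2: provided the maps `r ↦ F_{r:n}(x,y)` are not all
equal for some `(x,y)`, equality `Hₙ(x,y) = F(x,y) = Kₙ(x,y)` for all `(x,y)`
holds iff `(p₁,…,pₙ) = (1/n,…,1/n)`. -/
theorem stmt10 (n : ℕ) (hn : 1 ≤ n) (f : ℝ → ℝ → ℝ)
    (hmeas : Measurable fun p : ℝ × ℝ => f p.1 p.2)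
    (hpos : ∀ u v, 0 ≤ f u v)
    (hint : Integrable fun p : ℝ × ℝ => f p.1 p.2)
    (hprob : ∫ p : ℝ × ℝ, f p.1 p.2 = 1)
    (p : ℕ → ℝ) (hp0 : ∀ i, 1 ≤ i → i ≤ n → 0 ≤ p i)
    (hpdec : ∀ i j, 1 ≤ i → i ≤ j → j ≤ n → p j ≤ p i)
    (hp1 : ∑ i ∈ Finset.Icc 1 n, p i = 1)
    (hne : ∃ x y : ℝ, ∃ r s, r ∈ Finset.Icc 1 n ∧ s ∈ Finset.Icc 1 n ∧
      concomCDF f n r x y ≠ concomCDF f n s x y) :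
    (∀ x y : ℝ,
        ∑ i ∈ Finset.Icc 1 n, p i * concomCDF f n (n - i + 1) x y = jointCDF f x y ∧
        jointCDF f x y = ∑ i ∈ Finset.Icc 1 n, p i * concomCDF f n i x y) ↔
      ∀ i, 1 ≤ i → i ≤ n → p i = (1 / n : ℝ) :=
  stmt10_general n hn f hpos hint hprob p
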